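/- Let I be the left ideal generated by p in R<x,x*>, let p' be the leading (highest-degree homogeneous) part of p, and let p' = p_1 ... p_k be a factorization into irreducible homogeneous factors. If I is not real, then for some j in {1,...,k}, one of +(p_1 ... p_j + p_j* ... p_1*) or -(p_1 ... p_j + p_j* ... p_1*) is a sum of squares. -/

import Mathlib

open scoped BigOperators

noncomputable section

/-- The free real *-algebra on `g` variables `x₁,…,x_g` and their formal adjoints
`x₁*,…,x_g*`, modeled as the monoid algebra of the free monoid on `2g` letters,
where `Sum.inl i` is `xᵢ` and `Sum.inr i` is `xᵢ*`. -/
abbrev FreeStarAlg (g : ℕ) := MonoidAlgebra ℝ (FreeMonoid (Fin g ⊕ Fin g))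

namespace FreeStarAlg

variable {g : ℕ}

/-- The involution on words: reverse the word and star each letter. -/
def starWord (w : FreeMonoid (Fin g ⊕ Fin g)) : FreeMonoid (Fin g ⊕ Fin g) :=
  FreeMonoid.ofList (((FreeMonoid.toList w).map Sum.swap).reverse)

/-- The involution `p ↦ p*` on the free *-algebra. -/
def starP (p : FreeStarAlg g) : FreeStarAlg g :=
  MonoidAlgebra.ofCoeff (Finsupp.mapDomain starWord p.coeff)

/-- The monomial corresponding to a word. -/
def mono (w : FreeMonoid (Fin g ⊕ Fin g)) : FreeStarAlg g :=
  MonoidAlgebra.single w 1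

/-- Degree of a noncommutative polynomial. -/
def deg (p : FreeStarAlg g) : ℕ :=
  p.coeff.support.sup fun w => (FreeMonoid.toList w).length

/-- `p` is homogeneous of degree `d`: every word appearing in `p` has length `d`. -/
def IsHom (d : ℕ) (p : FreeStarAlg g) : Prop :=
  ∀ w ∈ p.coeff.support, (FreeMonoid.toList w).length = d

/-- `p` is a (finite) sum of hermitian squares `qᵢ* qᵢ`. -/
def IsSOS (p : FreeStarAlg g) : Prop :=
  ∃ (k : ℕ) (q : Fin k → FreeStarAlg g), p = ∑ i, starP (q i) * q i

/-- Membership in `I + I*`. -/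
def MemIplusIstar (I : Submodule (FreeStarAlg g) (FreeStarAlg g)) (p : FreeStarAlg g) : Prop :=
  ∃ u ∈ I, ∃ v ∈ I, p = u + starP v

/-- A left ideal `I` is real if `∑ aᵢ* aᵢ ∈ I + I*` forces every `aᵢ ∈ I`. -/
def IsRealIdeal (I : Submodule (FreeStarAlg g) (FreeStarAlg g)) : Prop :=
  ∀ (r : ℕ) (a : Fin r → FreeStarAlg g),
    MemIplusIstar I (∑ i, starP (a i) * a i) → ∀ i, a i ∈ I

/-- The left ideal generated by a set `S`. -/
def leftIdealGen (S : Set (FreeStarAlg g)) : Submodule (FreeStarAlg g) (FreeStarAlg g) :=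
  Submodule.span (FreeStarAlg g) S

/-- `p` is irreducible: it cannot be written as a product of two polynomials of
strictly smaller degree. -/
def Irred (p : FreeStarAlg g) : Prop :=
  ¬ ∃ q r : FreeStarAlg g, p = q * r ∧ deg q < deg p ∧ deg r < deg p

/-- `p` is analytic: it contains no starred variables. -/
def IsAnalytic (p : FreeStarAlg g) : Prop :=
  ∀ w ∈ p.coeff.support, ∀ l ∈ FreeMonoid.toList w, l.isLeft

end FreeStarAlg

open FreeStarAlg

/-!
Since `I = R⟨x,x*⟩ p` is not real, there are `bᵢ`, not all zero and each of minimal degree modulo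
`I`, with `∑ bᵢ* bᵢ = u p + (u p)*`; choose such a `u` of minimal degree `N`. Let `n = deg p`,
`d = maxᵢ deg bᵢ`, and let `c`, `P = p'` and `βᵢ` be the components of degree `N`, `n` and `d` of
`u`, `p` and `bᵢ`. Comparing components of degree `N + n` gives `2d ≤ N + n`, and
`c P + (c P)* = 0` if `2d < N + n`, while `c P + (c P)* = ∑ βᵢ* βᵢ` if `2d = N + n`.

If `N ≥ n`, neither case can occur: in the first, `c = P* E` with `E* = -E`, and `u - p* E` has
smaller degree; in the second, the positive semidefinite form `(f, f') ↦ ⟨c P + (c P)*, f* f'⟩`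
forces the top component of some `bᵢ` to be a left multiple of `P`, against minimality. If
`N < n`, the same identities give `P = Q c*` with `Q + Q*` zero, respectively positive
semidefinite as a Gram form and hence a sum of squares. Finally, a homogeneous left factor `Q` of
positive degree of a product `p₁ ⋯ p_k` of irreducible homogeneous factors is a scalar multiple of
a prefix `p₁ ⋯ p_j`.
-/

namespace FreeMonoid

variable {α : Type*}

def take (k : ℕ) (w : FreeMonoid α) : FreeMonoid α := ofList (w.toList.take k)

def drop (k : ℕ) (w : FreeMonoid α) : FreeMonoid α := ofList (w.toList.drop k)

@[simp] lemma length_take (k : ℕ) (w : FreeMonoid α) : (w.take k).length = min k w.length :=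
  List.length_take

@[simp] lemma length_drop (k : ℕ) (w : FreeMonoid α) : (w.drop k).length = w.length - k :=
  List.length_drop

@[simp] lemma take_mul_drop (k : ℕ) (w : FreeMonoid α) : w.take k * w.drop k = w :=
  List.take_append_drop k w.toList

lemma take_mul_of_le {k : ℕ} {u : FreeMonoid α} (hk : k ≤ u.length) (v : FreeMonoid α) :
    (u * v).take k = u.take k :=
  List.take_append_of_le_length hk

lemma drop_mul_of_le {k : ℕ} {u : FreeMonoid α} (hk : k ≤ u.length) (v : FreeMonoid α) :
    (u * v).drop k = u.drop k * v :=
  List.drop_append_of_le_length hk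

@[simp] lemma take_length_mul (u v : FreeMonoid α) : (u * v).take u.length = u :=
  List.take_left

@[simp] lemma drop_length_mul (u v : FreeMonoid α) : (u * v).drop u.length = v :=
  List.drop_left

lemma eq_of_mul_eq_mul_of_length_eq {u u' v v' : FreeMonoid α} (h : u * v = u' * v')
    (hu : u.length = u'.length) : u = u' ∧ v = v' := by
  have h₁ := congrArg (take u.length) h
  have h₂ := congrArg (drop u.length) h
  rw [take_length_mul, hu, take_length_mul] at h₁
  rw [drop_length_mul, hu, drop_length_mul] at h₂
  exact ⟨h₁, h₂⟩

open scoped Classical in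
lemma mem_image_take_drop_iff {w : FreeMonoid α} {q : FreeMonoid α × FreeMonoid α} :
    q ∈ (Finset.range (w.length + 1)).image (fun k => (w.take k, w.drop k)) ↔ q.1 * q.2 = w := by
  constructor
  · intro hq
    obtain ⟨k, -, rfl⟩ := Finset.mem_image.mp hq
    exact take_mul_drop k w
  · rintro rfl
    refine Finset.mem_image.mpr ⟨q.1.length, ?_, by simp⟩
    simp [length_mul]

end FreeMonoid

namespace FreeStarAlg

variable {g : ℕ}

open FreeMonoid
open scoped Classical

abbrev Word (g : ℕ) := FreeMonoid (Fin g ⊕ Fin g)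

@[simp] lemma length_starWord (w : Word g) : (starWord w).length = w.length := by
  simp [starWord, FreeMonoid.length]

lemma starWord_mul (u v : Word g) :
    starWord (u * v) = starWord v * starWord u := by
  simp [starWord, FreeMonoid.toList_mul, ← FreeMonoid.ofList_append]

@[simp] lemma starWord_starWord (w : Word g) : starWord (starWord w) = w := by
  simp [starWord, List.map_reverse, Function.comp_def]

lemma starWord_injective : Function.Injective (starWord (g := g)) :=
  Function.LeftInverse.injective starWord_starWord

lemma coeff_starP (f : FreeStarAlg g) (w : Word g) :
    (starP f).coeff w = f.coeff (starWord w) := by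
  simpa [starP] using Finsupp.mapDomain_apply starWord_injective f.coeff (starWord w)

@[simp] lemma starP_starP (f : FreeStarAlg g) : starP (starP f) = f := by
  ext w; simp [coeff_starP]

lemma starP_injective : Function.Injective (starP (g := g)) :=
  Function.LeftInverse.injective starP_starP

@[simp] lemma starP_zero : starP (0 : FreeStarAlg g) = 0 :=
  congrArg MonoidAlgebra.ofCoeff Finsupp.mapDomain_zero

@[simp] lemma starP_eq_zero_iff {f : FreeStarAlg g} : starP f = 0 ↔ f = 0 :=
  starP_injective.eq_iff' starP_zero

lemma starP_add (f h : FreeStarAlg g) : starP (f + h) = starP f + starP h := by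
  ext w; simp [coeff_starP]

lemma starP_sub (f h : FreeStarAlg g) : starP (f - h) = starP f - starP h := by
  ext w; simp [coeff_starP]

lemma starP_smul (r : ℝ) (f : FreeStarAlg g) : starP (r • f) = r • starP f := by
  ext w; simp [coeff_starP]

lemma starP_sum {ι : Type*} (s : Finset ι) (f : ι → FreeStarAlg g) :
    starP (∑ i ∈ s, f i) = ∑ i ∈ s, starP (f i) := by
  ext w; simp [coeff_starP, MonoidAlgebra.coeff_sum]

lemma starP_single (w : Word g) (r : ℝ) :
    starP (MonoidAlgebra.single w r) = MonoidAlgebra.single (starWord w) r :=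
  congrArg MonoidAlgebra.ofCoeff Finsupp.mapDomain_single

lemma starP_mul (f h : FreeStarAlg g) : starP (f * h) = starP h * starP f := by
  induction f using MonoidAlgebra.induction_linear with
  | zero => simp
  | add a b ha hb => rw [add_mul, starP_add, ha, hb, starP_add, mul_add]
  | single w r =>
    induction h using MonoidAlgebra.induction_linear with
    | zero => simp
    | add a b ha hb => rw [mul_add, starP_add, ha, hb, starP_add, add_mul]
    | single v s =>
      rw [MonoidAlgebra.single_mul_single, starP_single, starP_single, starP_single,
        MonoidAlgebra.single_mul_single, starWord_mul, mul_comm]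

lemma starP_starP_mul (f h : FreeStarAlg g) : starP (starP f * h) = starP h * f := by
  rw [starP_mul, starP_starP]

lemma starP_star_mul_self (f : FreeStarAlg g) : starP (starP f * f) = starP f * f :=
  starP_starP_mul f f

lemma length_le_deg {f : FreeStarAlg g} {w : Word g} (hw : w ∈ f.coeff.support) :
    w.length ≤ deg f :=
  Finset.le_sup (f := fun w => (FreeMonoid.toList w).length) hw

lemma deg_le_iff {f : FreeStarAlg g} {N : ℕ} :
    deg f ≤ N ↔ ∀ w ∈ f.coeff.support, w.length ≤ N :=
  Finset.sup_le_iff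

lemma coeff_eq_zero_of_deg_lt {f : FreeStarAlg g} {w : Word g} (h : deg f < w.length) :
    f.coeff w = 0 :=
  Finsupp.notMem_support_iff.mp fun hw => (length_le_deg hw).not_gt h

lemma exists_length_eq_deg {f : FreeStarAlg g} (hf : f ≠ 0) :
    ∃ w ∈ f.coeff.support, w.length = deg f := by
  obtain ⟨w, hw, he⟩ := Finset.exists_mem_eq_sup f.coeff.support
    (Finsupp.support_nonempty_iff.mpr (MonoidAlgebra.coeff_eq_zero.not.mpr hf))
    (fun w => (FreeMonoid.toList w).length)
  exact ⟨w, hw, he.symm⟩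

@[simp] lemma deg_zero : deg (0 : FreeStarAlg g) = 0 := rfl

lemma deg_starP_le (f : FreeStarAlg g) : deg (starP f) ≤ deg f := by
  refine deg_le_iff.mpr fun w hw => ?_
  rw [Finsupp.mem_support_iff, coeff_starP] at hw
  simpa using length_le_deg (Finsupp.mem_support_iff.mpr hw)

lemma deg_add_le (f h : FreeStarAlg g) : deg (f + h) ≤ max (deg f) (deg h) :=
  deg_le_iff.mpr fun _ hw => (Finset.mem_union.mp (Finsupp.support_add hw)).elim
    (fun hf => le_max_of_le_left (length_le_deg hf))
    (fun hh => le_max_of_le_right (length_le_deg hh))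

lemma deg_sub_le (f h : FreeStarAlg g) : deg (f - h) ≤ max (deg f) (deg h) := by
  have hneg : deg (-h) = deg h := by simp [deg, MonoidAlgebra.coeff_neg]
  simpa [sub_eq_add_neg, hneg] using deg_add_le f (-h)

lemma coeff_mul_eq_sum_range (f h : FreeStarAlg g) (w : Word g) :
    (f * h).coeff w =
      ∑ k ∈ Finset.range (w.length + 1), f.coeff (w.take k) * h.coeff (w.drop k) := by
  rw [MonoidAlgebra.coeff_mul_antidiag f h w _ mem_image_take_drop_iff, Finset.sum_image]
  intro k hk k' hk' he
  have := congrArg (fun q => q.1.length) he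
  simp only [length_take] at this
  simp only [Finset.coe_range, Set.mem_Iio] at hk hk'
  omega

lemma coeff_mul_of_deg_le {a b : ℕ} {f h : FreeStarAlg g} (hf : deg f ≤ a) (hh : deg h ≤ b)
    {w : Word g} (hw : w.length = a + b) :
    (f * h).coeff w = f.coeff (w.take a) * h.coeff (w.drop a) := by
  rw [coeff_mul_eq_sum_range, Finset.sum_eq_single a]
  · intro k hk hka
    rw [Finset.mem_range] at hk
    rcases lt_or_gt_of_ne hka with hlt | hgt
    · rw [coeff_eq_zero_of_deg_lt (w := w.drop k) (by simp; omega), mul_zero]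
    · rw [coeff_eq_zero_of_deg_lt (w := w.take k) (by simp; omega), zero_mul]
  · exact fun ha => absurd (Finset.mem_range.mpr (by omega)) ha

lemma coeff_mul_mul_of_deg_le {f h : FreeStarAlg g} {u v : Word g} (hf : deg f ≤ u.length)
    (hh : deg h ≤ v.length) : (f * h).coeff (u * v) = f.coeff u * h.coeff v := by
  rw [coeff_mul_of_deg_le hf hh (length_mul u v), take_length_mul, drop_length_mul]

lemma deg_mul_le (f h : FreeStarAlg g) : deg (f * h) ≤ deg f + deg h := by
  refine deg_le_iff.mpr fun w hw => ?_
  obtain ⟨u, hu, v, hv, rfl⟩ := Finset.mem_mul.mp (MonoidAlgebra.support_coeff_mul_subset f h hw)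
  rw [length_mul]
  exact add_le_add (length_le_deg hu) (length_le_deg hv)

lemma isHom_iff {d : ℕ} {f : FreeStarAlg g} :
    IsHom d f ↔ ∀ w : Word g, w.length ≠ d → f.coeff w = 0 :=
  ⟨fun hf w hw => Finsupp.notMem_support_iff.mp fun hmem => hw (hf w hmem),
    fun hf w hw => by_contra fun hne => Finsupp.mem_support_iff.mp hw (hf w hne)⟩

namespace IsHom

variable {d : ℕ} {f : FreeStarAlg g}

lemma coeff_eq_zero (hf : IsHom d f) {w : Word g} (hw : w.length ≠ d) : f.coeff w = 0 :=
  isHom_iff.mp hf w hw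

lemma deg_le (hf : IsHom d f) : deg f ≤ d :=
  deg_le_iff.mpr fun w hw => (hf w hw).le

lemma deg_eq (hf : IsHom d f) (hf0 : f ≠ 0) : deg f = d := by
  obtain ⟨w, hw, he⟩ := exists_length_eq_deg hf0
  exact he ▸ hf w hw

lemma add {h : FreeStarAlg g} (hf : IsHom d f) (hh : IsHom d h) : IsHom d (f + h) :=
  isHom_iff.mpr fun w hw => by simp [hf.coeff_eq_zero hw, hh.coeff_eq_zero hw]

lemma neg (hf : IsHom d f) : IsHom d (-f) :=
  isHom_iff.mpr fun w hw => by simp [hf.coeff_eq_zero hw]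

lemma sub {h : FreeStarAlg g} (hf : IsHom d f) (hh : IsHom d h) : IsHom d (f - h) :=
  sub_eq_add_neg f h ▸ hf.add hh.neg

lemma smul (hf : IsHom d f) (r : ℝ) : IsHom d (r • f) :=
  isHom_iff.mpr fun w hw => by simp [hf.coeff_eq_zero hw]

lemma starP (hf : IsHom d f) : IsHom d (starP f) :=
  isHom_iff.mpr fun w hw => by
    rw [coeff_starP, hf.coeff_eq_zero (by simpa using hw)]

lemma mul {e : ℕ} {h : FreeStarAlg g} (hf : IsHom d f) (hh : IsHom e h) :
    IsHom (d + e) (f * h) := by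
  intro w hw
  obtain ⟨u, hu, v, hv, rfl⟩ := Finset.mem_mul.mp (MonoidAlgebra.support_coeff_mul_subset f h hw)
  exact (length_mul u v).trans (congrArg₂ (· + ·) (hf u hu) (hh v hv))

lemma cast {d' : ℕ} (hf : IsHom d f) (h : d = d') : IsHom d' f := h ▸ hf

end IsHom

lemma isHom_zero (d : ℕ) : IsHom d (0 : FreeStarAlg g) := fun _ hw => absurd hw (by simp)

lemma isHom_single (w : Word g) (r : ℝ) : IsHom w.length (MonoidAlgebra.single w r) := by
  intro v hv
  rw [Finset.mem_singleton.mp (Finsupp.support_single_subset hv)]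
  rfl

lemma isHom_sum {ι : Type*} {d : ℕ} (s : Finset ι) {f : ι → FreeStarAlg g}
    (hf : ∀ i ∈ s, IsHom d (f i)) : IsHom d (∑ i ∈ s, f i) :=
  isHom_iff.mpr fun w hw => by
    simp [MonoidAlgebra.coeff_sum, Finset.sum_eq_zero fun i hi => (hf i hi).coeff_eq_zero hw]

lemma isHom_list_prod {l : List (FreeStarAlg g)} (hl : ∀ q ∈ l, ∃ d, IsHom d q) :
    ∃ d, IsHom d l.prod := by
  induction l with
  | nil => exact ⟨0, isHom_single 1 1⟩
  | cons q l ih =>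
    obtain ⟨d, hq⟩ := hl q List.mem_cons_self
    obtain ⟨e, hl'⟩ := ih fun q' hq' => hl q' (List.mem_cons_of_mem _ hq')
    exact ⟨d + e, by rw [List.prod_cons]; exact hq.mul hl'⟩

lemma eq_single_one_of_isHom_zero {f : FreeStarAlg g} (hf : IsHom 0 f) :
    f = MonoidAlgebra.single 1 (f.coeff (1 : Word g)) := by
  ext w
  by_cases hw : w = 1
  · simp [hw]
  · rw [MonoidAlgebra.coeff_single, Finsupp.single_eq_of_ne hw]
    exact hf.coeff_eq_zero (mt length_eq_zero.mp hw)

def homComp (d : ℕ) (f : FreeStarAlg g) : FreeStarAlg g :=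
  MonoidAlgebra.ofCoeff (f.coeff.filter fun w => w.length = d)

lemma coeff_homComp (d : ℕ) (f : FreeStarAlg g) (w : Word g) :
    (homComp d f).coeff w = if w.length = d then f.coeff w else 0 :=
  Finsupp.filter_apply ..

lemma coeff_homComp_of_length {d : ℕ} (f : FreeStarAlg g) {w : Word g} (hw : w.length = d) :
    (homComp d f).coeff w = f.coeff w := by
  rw [coeff_homComp, if_pos hw]

lemma isHom_homComp (d : ℕ) (f : FreeStarAlg g) : IsHom d (homComp d f) :=
  isHom_iff.mpr fun w hw => by rw [coeff_homComp, if_neg hw]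

lemma IsHom.homComp_eq {d : ℕ} {f : FreeStarAlg g} (hf : IsHom d f) : homComp d f = f := by
  ext w
  rw [coeff_homComp]
  split_ifs with hw
  · rfl
  · exact (hf.coeff_eq_zero hw).symm

@[simp] lemma homComp_zero (d : ℕ) : homComp d (0 : FreeStarAlg g) = 0 :=
  (isHom_zero d).homComp_eq

lemma homComp_add (d : ℕ) (f h : FreeStarAlg g) :
    homComp d (f + h) = homComp d f + homComp d h := by
  ext w; simp only [coeff_homComp, MonoidAlgebra.coeff_add, Finsupp.add_apply]; split_ifs <;> simp

lemma homComp_sub (d : ℕ) (f h : FreeStarAlg g) :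
    homComp d (f - h) = homComp d f - homComp d h := by
  ext w; simp only [coeff_homComp, MonoidAlgebra.coeff_sub, Finsupp.sub_apply]; split_ifs <;> simp

lemma homComp_sum {ι : Type*} (d : ℕ) (s : Finset ι) (f : ι → FreeStarAlg g) :
    homComp d (∑ i ∈ s, f i) = ∑ i ∈ s, homComp d (f i) := by
  ext w
  simp only [coeff_homComp, MonoidAlgebra.coeff_sum, Finsupp.finsetSum_apply]
  split_ifs <;> simp

lemma homComp_starP (d : ℕ) (f : FreeStarAlg g) : homComp d (starP f) = starP (homComp d f) := by
  ext w; simp [coeff_homComp, coeff_starP]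

lemma homComp_eq_zero_of_deg_lt {d : ℕ} {f : FreeStarAlg g} (h : deg f < d) : homComp d f = 0 := by
  ext w
  rw [coeff_homComp]
  split_ifs with hw
  · exact coeff_eq_zero_of_deg_lt (hw ▸ h)
  · rfl

lemma homComp_deg_ne_zero {f : FreeStarAlg g} (hf : f ≠ 0) : homComp (deg f) f ≠ 0 := by
  obtain ⟨w, hw, hlen⟩ := exists_length_eq_deg hf
  intro h
  have := coeff_homComp_of_length f hlen
  rw [h] at this
  exact Finsupp.mem_support_iff.mp hw this.symm

lemma le_deg_of_homComp_ne_zero {d : ℕ} {f : FreeStarAlg g} (h : homComp d f ≠ 0) : d ≤ deg f :=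
  not_lt.mp (mt homComp_eq_zero_of_deg_lt h)

lemma deg_lt_of_homComp_eq_zero {d : ℕ} {f : FreeStarAlg g} (hd : 0 < d) (hf : deg f ≤ d)
    (h : homComp d f = 0) : deg f < d := by
  rcases eq_or_ne f 0 with rfl | hf0
  · exact hd
  · exact hf.lt_of_ne fun he => homComp_deg_ne_zero hf0 (he ▸ h)

lemma homComp_mul_of_deg_le {a b : ℕ} {f h : FreeStarAlg g} (hf : deg f ≤ a) (hh : deg h ≤ b) :
    homComp (a + b) (f * h) = homComp a f * homComp b h := by
  ext w
  by_cases hw : w.length = a + b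
  · rw [coeff_homComp_of_length _ hw, coeff_mul_of_deg_le hf hh hw,
      coeff_mul_of_deg_le (isHom_homComp a f).deg_le (isHom_homComp b h).deg_le hw,
      coeff_homComp_of_length _ (by simp; omega), coeff_homComp_of_length _ (by simp; omega)]
  · rw [(isHom_homComp _ _).coeff_eq_zero hw,
      ((isHom_homComp a f).mul (isHom_homComp b h)).coeff_eq_zero hw]

lemma eq_homComp_of_coeff_eq {d : ℕ} {f p : FreeStarAlg g} (hf : IsHom d f)
    (hcoeff : ∀ w : Word g, w.length = d → f.coeff w = p.coeff w) : f = homComp d p := by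
  ext w
  rw [coeff_homComp]
  split_ifs with hw
  · exact hcoeff w hw
  · exact hf.coeff_eq_zero hw

def pair (f h : FreeStarAlg g) : ℝ :=
  ∑ w ∈ f.coeff.support ∪ h.coeff.support, f.coeff w * h.coeff w

lemma pair_comm (f h : FreeStarAlg g) : pair f h = pair h f := by
  rw [pair, pair, Finset.union_comm]
  exact Finset.sum_congr rfl fun w _ => mul_comm _ _

lemma pair_eq_sum_of_subset (f h : FreeStarAlg g) {s : Finset (Word g)}
    (hs : h.coeff.support ⊆ s) : pair f h = ∑ w ∈ s, f.coeff w * h.coeff w := by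
  have vanish : ∀ t : Finset (Word g), ∀ w ∈ t, w ∉ h.coeff.support → f.coeff w * h.coeff w = 0 :=
    fun _ w _ hw => by rw [Finsupp.notMem_support_iff.mp hw, mul_zero]
  rw [pair, ← Finset.sum_subset Finset.subset_union_right (vanish _),
    Finset.sum_subset hs (vanish _)]

lemma pair_eq_sum (f h : FreeStarAlg g) :
    pair f h = ∑ w ∈ h.coeff.support, f.coeff w * h.coeff w :=
  pair_eq_sum_of_subset f h subset_rfl

lemma pair_add_left (f₁ f₂ h : FreeStarAlg g) : pair (f₁ + f₂) h = pair f₁ h + pair f₂ h := by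
  simp only [pair_eq_sum, ← Finset.sum_add_distrib, MonoidAlgebra.coeff_add, Finsupp.add_apply,
    add_mul]

lemma pair_smul_left (r : ℝ) (f h : FreeStarAlg g) : pair (r • f) h = r * pair f h := by
  simp only [pair_eq_sum, Finset.mul_sum, MonoidAlgebra.coeff_smul, Finsupp.smul_apply,
    smul_eq_mul, mul_assoc]

lemma pair_sub_left (f₁ f₂ h : FreeStarAlg g) : pair (f₁ - f₂) h = pair f₁ h - pair f₂ h := by
  simp only [pair_eq_sum, ← Finset.sum_sub_distrib, MonoidAlgebra.coeff_sub, Finsupp.sub_apply,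
    sub_mul]

lemma pair_sum_left {ι : Type*} (s : Finset ι) (f : ι → FreeStarAlg g) (h : FreeStarAlg g) :
    pair (∑ i ∈ s, f i) h = ∑ i ∈ s, pair (f i) h := by
  simp only [pair_eq_sum, MonoidAlgebra.coeff_sum, Finsupp.finsetSum_apply, Finset.sum_mul]
  exact Finset.sum_comm

lemma pair_smul_right (r : ℝ) (f h : FreeStarAlg g) : pair f (r • h) = r * pair f h := by
  rw [pair_comm, pair_smul_left, pair_comm]

lemma pair_sub_right (f h₁ h₂ : FreeStarAlg g) : pair f (h₁ - h₂) = pair f h₁ - pair f h₂ := by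
  rw [pair_comm, pair_sub_left, pair_comm h₁, pair_comm h₂]

lemma pair_sum_right {ι : Type*} (s : Finset ι) (f : FreeStarAlg g) (h : ι → FreeStarAlg g) :
    pair f (∑ i ∈ s, h i) = ∑ i ∈ s, pair f (h i) := by
  rw [pair_comm, pair_sum_left]
  exact Finset.sum_congr rfl fun i _ => pair_comm _ _

@[simp] lemma pair_zero_left (h : FreeStarAlg g) : pair 0 h = 0 := by
  simp [pair_eq_sum]

lemma pair_single_right (f : FreeStarAlg g) (w : Word g) (r : ℝ) :
    pair f (MonoidAlgebra.single w r) = f.coeff w * r := by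
  rw [pair_eq_sum_of_subset f (MonoidAlgebra.single w r) (s := {w})
    (by rw [MonoidAlgebra.coeff_single]; exact Finsupp.support_single_subset),
    Finset.sum_singleton, MonoidAlgebra.coeff_single, Finsupp.single_eq_same]

lemma pair_self_pos {f : FreeStarAlg g} (hf : f ≠ 0) : 0 < pair f f := by
  obtain ⟨w, hw⟩ := Finsupp.support_nonempty_iff.mpr (MonoidAlgebra.coeff_eq_zero.not.mpr hf)
  rw [pair_eq_sum]
  exact Finset.sum_pos' (fun w _ => mul_self_nonneg _)
    ⟨w, hw, mul_self_pos.mpr (Finsupp.mem_support_iff.mp hw)⟩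

lemma pair_starP_starP (f h : FreeStarAlg g) : pair (starP f) (starP h) = pair f h := by
  have hsupp : (starP h).coeff.support = h.coeff.support.image starWord := by
    ext w
    rw [Finset.mem_image, Finsupp.mem_support_iff, coeff_starP]
    exact ⟨fun hw => ⟨_, Finsupp.mem_support_iff.mpr hw, starWord_starWord w⟩,
      fun ⟨v, hv, hvw⟩ => hvw ▸ by simpa using Finsupp.mem_support_iff.mp hv⟩
  rw [pair_eq_sum, hsupp, Finset.sum_image fun _ _ _ _ h => starWord_injective h, pair_eq_sum]
  simp [coeff_starP]

lemma pair_starP_left (f h : FreeStarAlg g) : pair (starP f) h = pair f (starP h) := by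
  rw [← pair_starP_starP, starP_starP]

lemma pair_mul_mul {a b : ℕ} {f h X Y : FreeStarAlg g}
    (hf : IsHom a f) (hh : IsHom b h) (hX : IsHom a X) (hY : IsHom b Y) :
    pair (f * h) (X * Y) = pair f X * pair h Y := by
  set T := (f.coeff.support ∪ X.coeff.support) ×ˢ (h.coeff.support ∪ Y.coeff.support)
  have hlen : ∀ q ∈ T, q.1.length = a ∧ q.2.length = b := by
    intro q hq
    obtain ⟨h₁, h₂⟩ := Finset.mem_product.mp hq
    exact ⟨(Finset.mem_union.mp h₁).elim (hf _) (hX _), (Finset.mem_union.mp h₂).elim (hh _) (hY _)⟩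
  have hinj : Set.InjOn (fun q : Word g × Word g => q.1 * q.2) T := by
    intro q hq q' hq' he
    obtain ⟨h₁, h₂⟩ := eq_of_mul_eq_mul_of_length_eq he ((hlen q hq).1.trans (hlen q' hq').1.symm)
    exact Prod.ext h₁ h₂
  have hsupp : ∀ {F H : FreeStarAlg g}, F.coeff.support ⊆ f.coeff.support ∪ X.coeff.support →
      H.coeff.support ⊆ h.coeff.support ∪ Y.coeff.support →
      (F * H).coeff.support ⊆ T.image fun q => q.1 * q.2 := by
    intro F H hF hH w hw
    obtain ⟨u, hu, v, hv, rfl⟩ := Finset.mem_mul.mp (MonoidAlgebra.support_coeff_mul_subset F H hw)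
    exact Finset.mem_image.mpr ⟨(u, v), Finset.mem_product.mpr ⟨hF hu, hH hv⟩, rfl⟩
  rw [pair_eq_sum_of_subset _ _ (hsupp Finset.subset_union_right Finset.subset_union_right),
    Finset.sum_image hinj, pair_eq_sum_of_subset f X (s := _ ∪ _) Finset.subset_union_right,
    pair_eq_sum_of_subset h Y (s := _ ∪ _) Finset.subset_union_right, Finset.sum_mul_sum,
    show T = _ ×ˢ _ from rfl, Finset.sum_product]
  refine Finset.sum_congr rfl fun u hu => Finset.sum_congr rfl fun v hv => ?_
  have hq : (u, v) ∈ T := Finset.mem_product.mpr ⟨hu, hv⟩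
  rw [coeff_mul_mul_of_deg_le (hf.deg_le.trans (hlen _ hq).1.ge) (hh.deg_le.trans (hlen _ hq).2.ge),
    coeff_mul_mul_of_deg_le (hX.deg_le.trans (hlen _ hq).1.ge) (hY.deg_le.trans (hlen _ hq).2.ge)]
  ring

lemma IsSOS.smul {σ : FreeStarAlg g} (hσ : IsSOS σ) {r : ℝ} (hr : 0 ≤ r) : IsSOS (r • σ) := by
  obtain ⟨k, q, rfl⟩ := hσ
  refine ⟨k, fun i => √r • q i, ?_⟩
  simp only [Finset.smul_sum, starP_smul, smul_mul_assoc, mul_smul_comm, smul_smul,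
    Real.mul_self_sqrt hr]

lemma isSOS_zero : IsSOS (0 : FreeStarAlg g) := ⟨0, Fin.elim0, by simp⟩

lemma eq_sum_single_starWord_mul {e : ℕ} {τ : FreeStarAlg g} {s : Finset (Word g)}
    (hs : ∀ y ∈ s, y.length = e)
    (hsupp : ∀ w ∈ τ.coeff.support, starWord (w.take e) ∈ s ∧ w.drop e ∈ s) :
    τ = ∑ x ∈ s, ∑ y ∈ s, MonoidAlgebra.single (starWord x * y) (τ.coeff (starWord x * y)) := by
  have hinj : Set.InjOn (fun q : Word g × Word g => starWord q.1 * q.2) ↑(s ×ˢ s) := by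
    intro q hq q' hq' he
    have hq := Finset.mem_product.mp (Finset.mem_coe.mp hq)
    have hq' := Finset.mem_product.mp (Finset.mem_coe.mp hq')
    obtain ⟨h₁, h₂⟩ := eq_of_mul_eq_mul_of_length_eq he (by simp [hs _ hq.1, hs _ hq'.1])
    exact Prod.ext (starWord_injective h₁) h₂
  rw [← Finset.sum_product (f := fun q : Word g × Word g =>
      MonoidAlgebra.single (starWord q.1 * q.2) (τ.coeff (starWord q.1 * q.2))),
    ← Finset.sum_image (f := fun w => MonoidAlgebra.single w (τ.coeff w)) hinj]
  conv_lhs => rw [← MonoidAlgebra.sum_coeff_single τ]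
  refine Finset.sum_subset (fun w hw => Finset.mem_image.mpr ?_) fun w _ hw => ?_
  · refine ⟨(starWord (w.take e), w.drop e), Finset.mem_product.mpr (hsupp w hw), ?_⟩
    simp
  · rw [Finsupp.notMem_support_iff.mp hw, MonoidAlgebra.single_zero]

lemma starP_sum_single_mul_sum_single {s : Finset (Word g)} (v v' : s → ℝ) :
    starP (∑ y : s, MonoidAlgebra.single y.1 (v y)) * ∑ y : s, MonoidAlgebra.single y.1 (v' y) =
      ∑ x : s, ∑ y : s, MonoidAlgebra.single (starWord x.1 * y.1) (v x * v' y) := by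
  simp only [starP_sum, starP_single, Finset.sum_mul_sum, MonoidAlgebra.single_mul_single]

lemma posSemidef_gram {e : ℕ} {τ : FreeStarAlg g} (hherm : starP τ = τ)
    (hpsd : ∀ φ, IsHom e φ → 0 ≤ pair τ (starP φ * φ)) {s : Finset (Word g)}
    (hs : ∀ y ∈ s, y.length = e) :
    (Matrix.of fun x y : s => τ.coeff (starWord x.1 * y.1)).PosSemidef := by
  refine Matrix.PosSemidef.of_dotProduct_mulVec_nonneg
    (Matrix.IsHermitian.ext fun x y => ?_) fun v => ?_
  · change τ.coeff (starWord y.1 * x.1) = τ.coeff (starWord x.1 * y.1)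
    conv_lhs => rw [← hherm]
    rw [coeff_starP, starWord_mul, starWord_starWord]
  · have hφ : IsHom e (∑ y : s, MonoidAlgebra.single y.1 (v y)) :=
      isHom_sum _ fun y _ => (isHom_single y.1 (v y)).cast (hs y y.2)
    refine (hpsd _ hφ).trans_eq ?_
    rw [starP_sum_single_mul_sum_single]
    simp only [pair_sum_right, pair_single_right, dotProduct,
      Matrix.mulVec, Finset.mul_sum, Pi.star_apply, star_trivial, Matrix.of_apply]
    exact Finset.sum_congr rfl fun x _ => Finset.sum_congr rfl fun y _ => by ring

/-- A factorization `G = ∑ᵢ vᵢ vᵢᵀ` of the Gram matrix `G x y = τ(x* y)` writes `τ` as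
`∑ᵢ qᵢ* qᵢ` with `qᵢ = ∑ₓ vᵢ(x) x`. -/
lemma isSOS_of_pair_nonneg {e : ℕ} {τ : FreeStarAlg g} (hτ : IsHom (e + e) τ)
    (hherm : starP τ = τ) (hpsd : ∀ φ, IsHom e φ → 0 ≤ pair τ (starP φ * φ)) : IsSOS τ := by
  set s := τ.coeff.support.image (fun w => starWord (w.take e)) ∪
    τ.coeff.support.image (fun w => w.drop e)
  have hs : ∀ y ∈ s, y.length = e := by
    intro y hy
    rcases Finset.mem_union.mp hy with hy | hy <;> obtain ⟨w, hw, rfl⟩ := Finset.mem_image.mp hy <;>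
      simp [show w.length = e + e from hτ w hw]
  have hsupp : ∀ w ∈ τ.coeff.support, starWord (w.take e) ∈ s ∧ w.drop e ∈ s := fun w hw =>
    ⟨Finset.mem_union_left _ (Finset.mem_image_of_mem _ hw),
      Finset.mem_union_right _ (Finset.mem_image_of_mem _ hw)⟩
  obtain ⟨m, v, hv⟩ := Matrix.posSemidef_iff_eq_sum_vecMulVec.mp (posSemidef_gram hherm hpsd hs)
  have hτv : ∀ x y : s, τ.coeff (starWord x.1 * y.1) = ∑ i, v i x * v i y := fun x y => by
    simpa [Matrix.sum_apply, Matrix.vecMulVec_apply] using congrFun (congrFun hv x) y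
  refine ⟨m, fun i => ∑ y : s, MonoidAlgebra.single y.1 (v i y), ?_⟩
  rw [eq_sum_single_starWord_mul hs hsupp]
  simp_rw [← Finset.sum_coe_sort s, starP_sum_single_mul_sum_single, hτv]
  conv_rhs => rw [Finset.sum_comm]
  refine Finset.sum_congr rfl fun x _ => ?_
  conv_rhs => rw [Finset.sum_comm]
  exact Finset.sum_congr rfl fun y _ =>
    map_sum (MonoidAlgebra.singleAddHom (R := ℝ) (starWord x.1 * y.1)) _ _

def cutLeft (w : Word g) (f : FreeStarAlg g) : FreeStarAlg g :=
  MonoidAlgebra.ofCoeff (f.coeff.comapDomain (w * ·) (mul_right_injective w).injOn)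

def cutRight (z : Word g) (f : FreeStarAlg g) : FreeStarAlg g :=
  MonoidAlgebra.ofCoeff (f.coeff.comapDomain (· * z) (mul_left_injective z).injOn)

lemma coeff_cutLeft (w : Word g) (f : FreeStarAlg g) (v : Word g) :
    (cutLeft w f).coeff v = f.coeff (w * v) :=
  Finsupp.comapDomain_apply ..

lemma coeff_cutRight (z : Word g) (f : FreeStarAlg g) (v : Word g) :
    (cutRight z f).coeff v = f.coeff (v * z) :=
  Finsupp.comapDomain_apply ..

lemma IsHom.cutLeft {k n : ℕ} {f : FreeStarAlg g} (hf : IsHom (k + n) f) {w : Word g}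
    (hw : w.length = k) : IsHom n (cutLeft w f) :=
  isHom_iff.mpr fun v hv => by
    rw [coeff_cutLeft, hf.coeff_eq_zero (by rw [length_mul]; omega)]

lemma IsHom.cutRight {k n : ℕ} {f : FreeStarAlg g} (hf : IsHom (k + n) f) {z : Word g}
    (hz : z.length = n) : IsHom k (cutRight z f) :=
  isHom_iff.mpr fun v hv => by
    rw [coeff_cutRight, hf.coeff_eq_zero (by rw [length_mul]; omega)]

lemma pair_single_mul (f ψ : FreeStarAlg g) (w : Word g) :
    pair f (MonoidAlgebra.single w 1 * ψ) = pair (cutLeft w f) ψ := by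
  rw [pair_eq_sum_of_subset _ _ (MonoidAlgebra.support_coeff_single_mul_subset ψ 1 w),
    Finset.sum_image fun _ _ _ _ h => mul_left_cancel h, pair_eq_sum]
  refine Finset.sum_congr rfl fun v _ => ?_
  rw [MonoidAlgebra.coeff_single_mul_mul, coeff_cutLeft, one_mul]

/-- Levi's lemma for homogeneous elements. -/
lemma exists_isHom_eq_mul_of_mul_eq_mul {a e d : ℕ} {A B C D : FreeStarAlg g} (hA : IsHom a A)
    (hB : IsHom (e + d) B) (hC : IsHom (a + e) C) (hD : IsHom d D) (hD0 : D ≠ 0)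
    (h : A * B = C * D) : ∃ E, IsHom e E ∧ C = A * E := by
  obtain ⟨z, hz, hzlen⟩ := exists_length_eq_deg hD0
  rw [hD.deg_eq hD0] at hzlen
  have hDz : D.coeff z ≠ 0 := Finsupp.mem_support_iff.mp hz
  have hE : IsHom e ((D.coeff z)⁻¹ • cutRight z B) := (hB.cutRight hzlen).smul _
  refine ⟨_, hE, ?_⟩
  ext w
  by_cases hw : w.length = a + e
  · have hlen : (w * z).length = a + (e + d) := by rw [length_mul]; omega
    have key := congrArg (fun F => F.coeff (w * z)) h
    rw [coeff_mul_of_deg_le hA.deg_le hB.deg_le hlen, take_mul_of_le (by omega),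
      drop_mul_of_le (by omega), coeff_mul_mul_of_deg_le (hC.deg_le.trans hw.ge)
        (hD.deg_le.trans hzlen.ge)] at key
    rw [coeff_mul_of_deg_le hA.deg_le hE.deg_le hw, MonoidAlgebra.coeff_smul, Finsupp.smul_apply,
      coeff_cutRight, smul_eq_mul, mul_left_comm, key, mul_comm (C.coeff w),
      inv_mul_cancel_left₀ hDz]
  · rw [hC.coeff_eq_zero hw, (hA.mul hE).coeff_eq_zero hw]

lemma eq_smul_of_forall_pair_eq_zero {n : ℕ} {φ G : FreeStarAlg g} (hφ : IsHom n φ)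
    (hG : IsHom n G) (hG0 : G ≠ 0)
    (h : ∀ ψ, IsHom n ψ → pair G ψ = 0 → pair φ ψ = 0) :
    φ = (pair φ G / pair G G) • G := by
  have hGG : pair G G ≠ 0 := (pair_self_pos hG0).ne'
  set ρ := φ - (pair φ G / pair G G) • G
  have hGρ : pair G ρ = 0 := by
    rw [pair_sub_right, pair_smul_right, pair_comm G φ]
    field_simp
    ring
  have hρρ : pair ρ ρ = 0 := by
    rw [pair_sub_left, pair_smul_left, h ρ (hφ.sub (hG.smul _)) hGρ, hGρ]
    ring
  by_contra hne
  exact (pair_self_pos (sub_ne_zero.mpr hne)).ne' hρρ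

/-- Each left slice `cutLeft w f` is orthogonal to `G⊥`, hence a multiple of `G`. -/
lemma exists_eq_mul_of_forall_pair_eq_zero {k n : ℕ} {f G : FreeStarAlg g}
    (hf : IsHom (k + n) f) (hG : IsHom n G) (hG0 : G ≠ 0)
    (h : ∀ w : Word g, w.length = k → ∀ ψ, IsHom n ψ → pair G ψ = 0 →
      pair f (MonoidAlgebra.single w 1 * ψ) = 0) :
    ∃ F, IsHom k F ∧ f = F * G := by
  set c : Word g → ℝ := fun w => pair (cutLeft w f) G / pair G G
  have hslice : ∀ w : Word g, w.length = k → cutLeft w f = c w • G := fun w hw =>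
    eq_smul_of_forall_pair_eq_zero (hf.cutLeft hw) hG hG0 fun ψ hψ hGψ => by
      rw [← pair_single_mul]; exact h w hw ψ hψ hGψ
  set S := f.coeff.support.image (take k)
  have hS : ∀ v ∈ S, v.length = k := by
    intro v hv
    obtain ⟨w, hw, rfl⟩ := Finset.mem_image.mp hv
    simp [show w.length = k + n from hf w hw]
  set F := ∑ v ∈ S, MonoidAlgebra.single v (c v)
  have hF : ∀ v, F.coeff v = if v ∈ S then c v else 0 := fun v => by
    simp [F, MonoidAlgebra.coeff_sum, Finsupp.single_apply]
  have hFhom : IsHom k F := isHom_sum _ fun v hv => (isHom_single v _).cast (hS v hv)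
  refine ⟨F, hFhom, ?_⟩
  ext w
  by_cases hw : w.length = k + n
  · have hk : (w.take k).length = k := by simp; omega
    rw [coeff_mul_of_deg_le hFhom.deg_le hG.deg_le hw, hF]
    split_ifs with hmem
    · simpa [coeff_cutLeft] using congrArg (fun F => F.coeff (w.drop k)) (hslice _ hk)
    · rw [zero_mul]
      by_contra hne
      exact hmem (Finset.mem_image_of_mem _ (Finsupp.mem_support_iff.mpr hne))
  · rw [hf.coeff_eq_zero hw, (hFhom.mul hG).coeff_eq_zero hw]

lemma Irred.eq_smul_of_eq_mul {s e : ℕ} {q Q E : FreeStarAlg g} (hq : Irred q) (hq0 : q ≠ 0)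
    (hs : 0 < s) (hQ : IsHom s Q) (hE : IsHom e E) (h : q = Q * E) :
    ∃ μ : ℝ, μ ≠ 0 ∧ q = μ • Q := by
  have hQ0 : Q ≠ 0 := by rintro rfl; simp [h] at hq0
  have hE0 : E ≠ 0 := by rintro rfl; simp [h] at hq0
  have hdeg : deg q = s + e := by rw [h]; exact (hQ.mul hE).deg_eq (h ▸ hq0)
  rcases Nat.eq_zero_or_pos e with rfl | he
  · refine ⟨E.coeff 1, fun hc => hE0 ?_, ?_⟩
    · rw [eq_single_one_of_isHom_zero hE, hc, MonoidAlgebra.single_zero]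
    · ext w
      rw [h, MonoidAlgebra.coeff_smul, Finsupp.smul_apply, smul_eq_mul, mul_comm,
        ← MonoidAlgebra.coeff_mul_single_one, ← eq_single_one_of_isHom_zero hE]
  · exact absurd ⟨Q, E, h, by rw [hQ.deg_eq hQ0]; omega, by rw [hE.deg_eq hE0]; omega⟩ hq

lemma exists_take_prod_eq_smul {l : List (FreeStarAlg g)}
    (hl : ∀ q ∈ l, Irred q ∧ ∃ d, IsHom d q) (hl0 : l.prod ≠ 0) {s t : ℕ} {Q R : FreeStarAlg g}
    (hs : 0 < s) (hQ : IsHom s Q) (hR : IsHom t R) (h : l.prod = Q * R) :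
    ∃ j, 1 ≤ j ∧ j ≤ l.length ∧ ∃ μ : ℝ, μ ≠ 0 ∧ (l.take j).prod = μ • Q := by
  induction l generalizing s Q with
  | nil =>
    rw [List.prod_nil] at h hl0
    have h₁ : deg (1 : FreeStarAlg g) = 0 := (isHom_single (1 : Word g) (1 : ℝ)).deg_eq hl0
    rw [h, (hQ.mul hR).deg_eq (h ▸ hl0)] at h₁
    omega
  | cons q l ih =>
    rw [List.prod_cons] at h hl0
    obtain ⟨hirr, d, hq⟩ := hl q List.mem_cons_self
    have hl' : ∀ q ∈ l, Irred q ∧ ∃ d, IsHom d q := fun q' hq' => hl q' (List.mem_cons_of_mem _ hq')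
    obtain ⟨D, hL⟩ := isHom_list_prod fun q' hq' => (hl' q' hq').2
    have hq0 : q ≠ 0 := left_ne_zero_of_mul hl0
    have hL0 : l.prod ≠ 0 := right_ne_zero_of_mul hl0
    have hR0 : R ≠ 0 := right_ne_zero_of_mul (h ▸ hl0)
    have hdeg : d + D = s + t := by
      rw [← (hq.mul hL).deg_eq hl0, h, (hQ.mul hR).deg_eq (h ▸ hl0)]
    rcases le_or_gt s d with hsd | hds
    · obtain ⟨E, hE, hqE⟩ := exists_isHom_eq_mul_of_mul_eq_mul hQ
        (hR.cast (by omega : t = (d - s) + D)) (hq.cast (by omega : d = s + (d - s))) hL hL0 h.symm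
      obtain ⟨μ, hμ, hqμ⟩ := hirr.eq_smul_of_eq_mul hq0 hs hQ hE hqE
      exact ⟨1, le_rfl, by simp, μ, hμ, by simpa using hqμ⟩
    · obtain ⟨E, hE, hQE⟩ := exists_isHom_eq_mul_of_mul_eq_mul hq
        (hL.cast (by omega : D = (s - d) + t)) (hQ.cast (by omega : s = d + (s - d))) hR hR0 h
      have hLE : l.prod = E * R := mul_left_cancel₀ hq0 (by rw [h, hQE, mul_assoc])
      obtain ⟨j, hj1, hjl, μ, hμ, hj⟩ := ih hl' hL0 (by omega) hE hLE
      refine ⟨j + 1, by omega, by simpa using hjl, μ, hμ, ?_⟩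
      rw [List.take_succ_cons, List.prod_cons, hj, mul_smul_comm, hQE]

def HasSOSPrefix (ps : List (FreeStarAlg g)) : Prop :=
  ∃ j, 1 ≤ j ∧ j ≤ ps.length ∧
    (IsSOS ((ps.take j).prod + starP (ps.take j).prod) ∨
      IsSOS (-((ps.take j).prod + starP (ps.take j).prod)))

lemma hasSOSPrefix_of_prod_eq_zero {ps : List (FreeStarAlg g)} (h : ps.prod = 0) :
    HasSOSPrefix ps := by
  have hne : ps ≠ [] := by rintro rfl; exact one_ne_zero h
  refine ⟨ps.length, List.length_pos_iff.mpr hne, le_rfl, Or.inl ?_⟩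
  rw [List.take_length, h, starP_zero, add_zero]
  exact isSOS_zero

lemma hasSOSPrefix_of_eq_mul {ps : List (FreeStarAlg g)}
    (hps : ∀ q ∈ ps, Irred q ∧ ∃ d, IsHom d q) (hps0 : ps.prod ≠ 0) {s t : ℕ}
    {Q R : FreeStarAlg g} (hs : 0 < s) (hQ : IsHom s Q) (hR : IsHom t R) (h : ps.prod = Q * R)
    (hsos : IsSOS (Q + starP Q)) : HasSOSPrefix ps := by
  obtain ⟨j, hj1, hjl, μ, hμ, hj⟩ := exists_take_prod_eq_smul hps hps0 hs hQ hR h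
  have hsum : (ps.take j).prod + starP (ps.take j).prod = μ • (Q + starP Q) := by
    rw [hj, starP_smul, smul_add]
  refine ⟨j, hj1, hjl, ?_⟩
  rcases hμ.lt_or_gt with hneg | hpos
  · exact Or.inr (by rw [hsum, ← neg_smul]; exact hsos.smul (by linarith))
  · exact Or.inl (by rw [hsum]; exact hsos.smul hpos.le)

lemma pair_add_starP_left (x X : FreeStarAlg g) :
    pair (x + starP x) X = pair x X + pair x (starP X) := by
  rw [pair_add_left, pair_starP_left]

lemma starP_single_mul_mul_single_mul (z z' : Word g) (φ φ' : FreeStarAlg g) :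
    starP (MonoidAlgebra.single z 1 * φ) * (MonoidAlgebra.single z' 1 * φ') =
      starP φ * (MonoidAlgebra.single (starWord z * z') 1 * φ') := by
  rw [starP_mul, starP_single, mul_assoc, ← mul_assoc (MonoidAlgebra.single (starWord z) (1 : ℝ)),
    MonoidAlgebra.single_mul_single, one_mul]

section SumOfSquares

variable {ι : Type*} [Fintype ι] {d : ℕ} {β : ι → FreeStarAlg g}

lemma pair_sum_star_mul_self (hβ : ∀ i, IsHom d (β i)) {f f' : FreeStarAlg g} (hf : IsHom d f)
    (hf' : IsHom d f') :
    pair (∑ i, starP (β i) * β i) (starP f * f') = ∑ i, pair (β i) f * pair (β i) f' := by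
  rw [pair_sum_left]
  refine Finset.sum_congr rfl fun i _ => ?_
  rw [pair_mul_mul (hβ i).starP (hβ i) hf.starP hf', pair_starP_starP]

lemma pair_sum_star_mul_self_nonneg (hβ : ∀ i, IsHom d (β i)) {f : FreeStarAlg g}
    (hf : IsHom d f) : 0 ≤ pair (∑ i, starP (β i) * β i) (starP f * f) := by
  rw [pair_sum_star_mul_self hβ hf hf]
  exact Finset.sum_nonneg fun i _ => mul_self_nonneg _

lemma pair_eq_zero_of_pair_sum_star_mul_self_eq_zero (hβ : ∀ i, IsHom d (β i))
    {f : FreeStarAlg g} (hf : IsHom d f) (h : pair (∑ i, starP (β i) * β i) (starP f * f) = 0)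
    (i : ι) : pair (β i) f = 0 := by
  rw [pair_sum_star_mul_self hβ hf hf] at h
  exact mul_self_eq_zero.mp
    ((Finset.sum_eq_zero_iff_of_nonneg fun i _ => mul_self_nonneg _).mp h i (Finset.mem_univ i))

lemma sum_star_mul_self_ne_zero (hβ : ∀ i, IsHom d (β i)) {i : ι} (hi : β i ≠ 0) :
    ∑ i, starP (β i) * β i ≠ 0 := fun h =>
  (pair_self_pos hi).ne' (pair_eq_zero_of_pair_sum_star_mul_self_eq_zero hβ (hβ i) (by simp [h]) i)

end SumOfSquares

lemma exists_factor_add_starP_eq_zero {N n : ℕ} {c P : FreeStarAlg g} (hc : IsHom N c)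
    (hc0 : c ≠ 0) (hP : IsHom n P) (hNn : N < n) (h : c * P + starP (c * P) = 0) :
    ∃ Q, IsHom (n - N) Q ∧ P = Q * starP c ∧ Q + starP Q = 0 := by
  have h' : c * P = starP P * -starP c := by
    rw [mul_neg, ← starP_mul, eq_neg_iff_add_eq_zero, h]
  obtain ⟨E, hE, hPE⟩ := exists_isHom_eq_mul_of_mul_eq_mul hc (hP.cast (by omega))
    (hP.starP.cast (by omega : n = N + (n - N))) hc.starP.neg (by simpa using hc0) h'
  have hP' : P = starP E * starP c := by rw [← starP_mul, ← hPE, starP_starP]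
  refine ⟨starP E, hE.starP, hP', ?_⟩
  have hzero : c * ((starP E + E) * starP c) = 0 := by
    calc c * ((starP E + E) * starP c) = c * (starP E * starP c) + c * E * starP c := by
          noncomm_ring
      _ = c * P + starP (c * P) := by rw [← hP', ← hPE, starP_mul]
      _ = 0 := h
  rw [starP_starP]
  exact (mul_eq_zero.mp ((mul_eq_zero.mp hzero).resolve_left hc0)).resolve_right
    (by simpa using hc0)

lemma exists_cofactor_add_starP_eq_zero {N n : ℕ} {c P : FreeStarAlg g} (hc : IsHom N c)
    (hP : IsHom n P) (hP0 : P ≠ 0) (hnN : n ≤ N) (h : c * P + starP (c * P) = 0) :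
    ∃ E, IsHom (N - n) E ∧ c = starP P * E ∧ E + starP E = 0 := by
  have h' : starP P * -starP c = c * P := by
    rw [mul_neg, ← starP_mul, neg_eq_iff_add_eq_zero, add_comm, h]
  obtain ⟨E, hE, hcE⟩ := exists_isHom_eq_mul_of_mul_eq_mul hP.starP
    (hc.starP.neg.cast (by omega)) (hc.cast (by omega : N = n + (N - n))) hP hP0 h'
  refine ⟨E, hE, hcE, ?_⟩
  have hzero : starP P * ((E + starP E) * P) = 0 := by
    calc starP P * ((E + starP E) * P) = starP P * E * P + starP P * (starP E * P) := by
          noncomm_ring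
      _ = c * P + starP (c * P) := by rw [← hcE, hcE, starP_mul, starP_mul, starP_starP]
      _ = 0 := h
  exact (mul_eq_zero.mp ((mul_eq_zero.mp hzero).resolve_left (by simpa using hP0))).resolve_right
    hP0

/-- The witness is `u - p* E`, where `c = P* E` and `E* = -E`. -/
lemma exists_deg_lt_of_add_starP_eq_zero {p u : FreeStarAlg g} (hn : 0 < deg p)
    (hnN : deg p ≤ deg u) (hP0 : homComp (deg p) p ≠ 0)
    (h : homComp (deg u) u * homComp (deg p) p +
      starP (homComp (deg u) u * homComp (deg p) p) = 0) :
    ∃ u', deg u' < deg u ∧ u' * p + starP (u' * p) = u * p + starP (u * p) := by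
  set n := deg p
  set N := deg u
  obtain ⟨E, hE, hcE, hanti⟩ := exists_cofactor_add_starP_eq_zero (isHom_homComp N u)
    (isHom_homComp n p) hP0 hnN h
  have hstarE : starP E = -E := eq_neg_of_add_eq_zero_right hanti
  refine ⟨u - starP p * E, ?_, ?_⟩
  · have hdeg : deg (starP p * E) ≤ n + (N - n) :=
      (deg_mul_le _ _).trans (add_le_add (deg_starP_le p) hE.deg_le)
    have hpE : homComp N (starP p * E) = starP (homComp n p) * E := by
      have := homComp_mul_of_deg_le (deg_starP_le p) hE.deg_le
      rwa [Nat.add_sub_cancel' hnN, homComp_starP, hE.homComp_eq] at this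
    have htop : homComp N (u - starP p * E) = 0 := by rw [homComp_sub, hpE, ← hcE, sub_self]
    exact deg_lt_of_homComp_eq_zero (by omega)
      ((deg_sub_le _ _).trans (max_le le_rfl (by omega))) htop
  · simp only [sub_mul, starP_sub, starP_mul, starP_starP, hstarE]
    noncomm_ring

section TopDegree

variable {ι : Type*} [Fintype ι] {β : ι → FreeStarAlg g} {c P : FreeStarAlg g}

lemma exists_isHom_pair_starP_eq_one {N : ℕ} (hc : IsHom N c) (hc0 : c ≠ 0) :
    ∃ ψ, IsHom N ψ ∧ pair c (starP ψ) = 1 :=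
  ⟨(pair c c)⁻¹ • starP c, hc.starP.smul _, by
    rw [starP_smul, starP_starP, pair_smul_right, inv_mul_cancel₀ (pair_self_pos hc0).ne']⟩

/-- Test the form `pair (c P + (c P)*) (f* f')` against `f = x ψ₀`, `f' = y ψ` with `w = x* y`. -/
lemma pair_single_mul_eq_zero_of_eq_sum_star_mul_self {e N : ℕ} (hc : IsHom N c) (hc0 : c ≠ 0)
    (hP : IsHom (e + e + N) P) (hβ : ∀ i, IsHom (e + N) (β i))
    (h : c * P + starP (c * P) = ∑ i, starP (β i) * β i) {w : Word g} (hw : w.length = e + e)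
    {ψ : FreeStarAlg g} (hψ : IsHom N ψ) (hcψ : pair (starP c) ψ = 0) :
    pair P (MonoidAlgebra.single w 1 * ψ) = 0 := by
  have hpair : ∀ (z : Word g) (φ φ' : FreeStarAlg g), z.length = e + e → IsHom N φ → IsHom N φ' →
      pair (c * P) (starP φ * (MonoidAlgebra.single z 1 * φ')) =
        pair c (starP φ) * pair P (MonoidAlgebra.single z 1 * φ') := fun z φ φ' hz hφ hφ' =>
    pair_mul_mul hc hP hφ.starP (((isHom_single z 1).cast hz).mul hφ')
  have hlen : ∀ a b : Word g, a.length = e → b.length = e → (starWord a * b).length = e + e :=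
    fun a b ha hb => by simp [length_mul, ha, hb]
  obtain ⟨ψ₀, hψ₀, hcψ₀⟩ := exists_isHom_pair_starP_eq_one hc hc0
  rw [pair_starP_left] at hcψ
  set x := starWord (w.take e)
  set y := w.drop e
  have hx : x.length = e := by simp [x]; omega
  have hy : y.length = e := by simp [y]; omega
  have hf : IsHom (e + N) (MonoidAlgebra.single x 1 * ψ₀) := ((isHom_single x 1).cast hx).mul hψ₀
  have hf' : IsHom (e + N) (MonoidAlgebra.single y 1 * ψ) := ((isHom_single y 1).cast hy).mul hψ
  have h₀ : pair (∑ i, starP (β i) * β i)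
      (starP (MonoidAlgebra.single y 1 * ψ) * (MonoidAlgebra.single y 1 * ψ)) = 0 := by
    rw [← h, pair_add_starP_left, starP_star_mul_self, starP_single_mul_mul_single_mul,
      hpair _ _ _ (hlen y y hy hy) hψ hψ, hcψ]
    simp
  have h₁ := pair_sum_star_mul_self hβ hf hf'
  simp only [pair_eq_zero_of_pair_sum_star_mul_self_eq_zero hβ hf' h₀, mul_zero,
    Finset.sum_const_zero] at h₁
  rwa [← h, pair_add_starP_left, starP_starP_mul, starP_single_mul_mul_single_mul,
    starP_single_mul_mul_single_mul, hpair _ _ _ (hlen x y hx hy) hψ₀ hψ,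
    hpair _ _ _ (hlen y x hy hx) hψ hψ₀, hcψ₀, hcψ, zero_mul, add_zero, one_mul,
    starWord_starWord, take_mul_drop] at h₁

lemma exists_factor_isSOS_of_eq_sum_star_mul_self {e N : ℕ} (hc : IsHom N c) (hc0 : c ≠ 0)
    (hP : IsHom (e + e + N) P) (hβ : ∀ i, IsHom (e + N) (β i))
    (h : c * P + starP (c * P) = ∑ i, starP (β i) * β i) :
    ∃ Q, IsHom (e + e) Q ∧ P = Q * starP c ∧ IsSOS (Q + starP Q) := by
  obtain ⟨Q, hQ, hPQ⟩ := exists_eq_mul_of_forall_pair_eq_zero hP hc.starP (by simpa using hc0)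
    fun w hw ψ hψ hcψ => pair_single_mul_eq_zero_of_eq_sum_star_mul_self hc hc0 hP hβ h hw hψ hcψ
  refine ⟨Q, hQ, hPQ, isSOS_of_pair_nonneg (hQ.add hQ.starP)
    (by rw [starP_add, starP_starP, add_comm]) fun φ hφ => ?_⟩
  obtain ⟨ψ₀, hψ₀, hcψ₀⟩ := exists_isHom_pair_starP_eq_one hc hc0
  have hpos := pair_sum_star_mul_self_nonneg hβ (hφ.mul hψ₀)
  have hval : pair (c * P) (starP (φ * ψ₀) * (φ * ψ₀)) = pair Q (starP φ * φ) := by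
    rw [starP_mul, mul_assoc, ← mul_assoc (starP φ),
      pair_mul_mul hc hP hψ₀.starP ((hφ.starP.mul hφ).mul hψ₀), hcψ₀, one_mul, hPQ,
      pair_mul_mul hQ hc.starP (hφ.starP.mul hφ) hψ₀, pair_starP_left c ψ₀, hcψ₀, mul_one]
  rw [← h, pair_add_starP_left, starP_star_mul_self, hval] at hpos
  rw [pair_add_starP_left, starP_star_mul_self]
  linarith

lemma exists_eq_mul_of_eq_sum_star_mul_self {k n : ℕ} (hc : IsHom (k + k + n) c) (hP : IsHom n P)
    (hP0 : P ≠ 0) (hβ : ∀ i, IsHom (k + n) (β i))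
    (h : c * P + starP (c * P) = ∑ i, starP (β i) * β i) (i : ι) :
    ∃ γ, IsHom k γ ∧ β i = γ * P := by
  refine exists_eq_mul_of_forall_pair_eq_zero (hβ i) hP hP0 fun v hv ψ hψ hPψ => ?_
  have hf : IsHom (k + n) (MonoidAlgebra.single v 1 * ψ) := ((isHom_single v 1).cast hv).mul hψ
  refine pair_eq_zero_of_pair_sum_star_mul_self_eq_zero hβ hf ?_ i
  have hX : IsHom (k + k + n) (starP ψ * MonoidAlgebra.single (starWord v * v) 1) :=
    (hψ.starP.mul (isHom_single _ 1)).cast (by simp [length_mul, hv]; omega)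
  rw [← h, pair_add_starP_left, starP_star_mul_self, starP_single_mul_mul_single_mul, ← mul_assoc,
    pair_mul_mul hc hP hX hψ, hPψ]
  simp

end TopDegree

def IsReducedMod (p b : FreeStarAlg g) : Prop := ∀ q, deg b ≤ deg (b - q * p)

lemma exists_deg_min {P : FreeStarAlg g → Prop} (h : ∃ x, P x) :
    ∃ x, P x ∧ ∀ y, P y → deg x ≤ deg y := by
  obtain ⟨x, hx, hmin⟩ := (measure deg).wf.has_min {x | P x} h
  exact ⟨x, hx, fun y hy => not_lt.mp (hmin y hy)⟩

lemma exists_isReducedMod (p a : FreeStarAlg g) : ∃ q, IsReducedMod p (a - q * p) := by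
  obtain ⟨_, ⟨q, rfl⟩, hmin⟩ := exists_deg_min (P := fun x => ∃ q, a - q * p = x) ⟨a, 0, by simp⟩
  exact ⟨q, fun q' => hmin _ ⟨q + q', by noncomm_ring⟩⟩

lemma IsReducedMod.homComp_ne_mul {p b γ : FreeStarAlg g} (hb : IsReducedMod p b)
    (hn : 0 < deg p) (hle : deg p ≤ deg b) (hγ : IsHom (deg b - deg p) γ) :
    homComp (deg b) b ≠ γ * homComp (deg p) p := by
  intro h
  have hγp : homComp (deg b) (γ * p) = γ * homComp (deg p) p := by
    have := homComp_mul_of_deg_le hγ.deg_le (le_refl (deg p))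
    rwa [Nat.sub_add_cancel hle, hγ.homComp_eq] at this
  have hdeg : deg (γ * p) ≤ deg b := (deg_mul_le _ _).trans (by have := hγ.deg_le; omega)
  have htop : homComp (deg b) (b - γ * p) = 0 := by rw [homComp_sub, hγp, h, sub_self]
  exact (hb γ).not_gt (deg_lt_of_homComp_eq_zero (by omega)
    ((deg_sub_le _ _).trans (max_le le_rfl hdeg)) htop)

lemma exists_max_deg {ι : Type*} [Fintype ι] {b : ι → FreeStarAlg g} (hb : ∃ i, b i ≠ 0) :
    ∃ i, b i ≠ 0 ∧ ∀ j, deg (b j) ≤ deg (b i) := by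
  obtain ⟨i₀, hi₀⟩ := hb
  obtain ⟨i, -, hi⟩ :=
    Finset.exists_max_image Finset.univ (fun i => deg (b i)) ⟨i₀, Finset.mem_univ _⟩
  by_cases h : b i = 0
  · refine ⟨i₀, hi₀, fun j => ?_⟩
    have := hi j (Finset.mem_univ _)
    rw [h, deg_zero] at this
    omega
  · exact ⟨i, h, fun j => hi j (Finset.mem_univ j)⟩

section TopComponents

variable {ι : Type*} [Fintype ι] {b : ι → FreeStarAlg g} {d : ℕ}

lemma homComp_sum_star_mul_self (hd : ∀ i, deg (b i) ≤ d) :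
    homComp (d + d) (∑ i, starP (b i) * b i) =
      ∑ i, starP (homComp d (b i)) * homComp d (b i) := by
  rw [homComp_sum]
  refine Finset.sum_congr rfl fun i _ => ?_
  rw [homComp_mul_of_deg_le ((deg_starP_le _).trans (hd i)) (hd i), homComp_starP]

lemma homComp_sum_star_mul_self_of_lt (hd : ∀ i, deg (b i) ≤ d) {k : ℕ} (hk : d + d < k) :
    homComp k (∑ i, starP (b i) * b i) = 0 := by
  rw [homComp_sum]
  refine Finset.sum_eq_zero fun i _ => homComp_eq_zero_of_deg_lt ((deg_mul_le _ _).trans_lt ?_)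
  have := deg_starP_le (b i)
  have := hd i
  omega

end TopComponents

lemma homComp_mul_add_starP (u p : FreeStarAlg g) :
    homComp (deg u + deg p) (u * p + starP (u * p)) =
      homComp (deg u) u * homComp (deg p) p + starP (homComp (deg u) u * homComp (deg p) p) := by
  rw [homComp_add, homComp_starP, homComp_mul_of_deg_le le_rfl le_rfl]

lemma deg_mul_add_starP_le (u p : FreeStarAlg g) : deg (u * p + starP (u * p)) ≤ deg u + deg p :=
  (deg_add_le _ _).trans (max_le (deg_mul_le _ _) ((deg_starP_le _).trans (deg_mul_le _ _)))

theorem hasSOSPrefix_of_sum_star_mul_self_eq {p u : FreeStarAlg g} {ps : List (FreeStarAlg g)}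
    (hn : 0 < deg p) (hps : ∀ q ∈ ps, Irred q ∧ ∃ d, IsHom d q)
    (hprod : homComp (deg p) p = ps.prod) (hP0 : homComp (deg p) p ≠ 0) {r : ℕ}
    {b : Fin r → FreeStarAlg g} (hb0 : ∃ i, b i ≠ 0) (hred : ∀ i, IsReducedMod p (b i))
    (hu : ∑ i, starP (b i) * b i = u * p + starP (u * p))
    (humin : ∀ u', ∑ i, starP (b i) * b i = u' * p + starP (u' * p) → deg u ≤ deg u') :
    HasSOSPrefix ps := by
  obtain ⟨i', hi'0, hd⟩ := exists_max_deg hb0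
  set n := deg p
  set N := deg u
  set d := deg (b i')
  set c := homComp N u
  have hc : IsHom N c := isHom_homComp N u
  have hβ : ∀ i, IsHom d (homComp d (b i)) := fun i => isHom_homComp d (b i)
  have hS0 := sum_star_mul_self_ne_zero hβ (homComp_deg_ne_zero hi'0)
  have hc0 : c ≠ 0 := homComp_deg_ne_zero fun hu0 => hS0 (by
    rw [← homComp_sum_star_mul_self hd, hu, hu0]; simp)
  have hdd : d + d ≤ N + n := (le_deg_of_homComp_ne_zero
    (homComp_sum_star_mul_self hd ▸ hS0)).trans (hu ▸ deg_mul_add_starP_le u p)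
  rcases hdd.lt_or_eq with hlt | heq
  · have hzero : c * homComp n p + starP (c * homComp n p) = 0 := by
      rw [← homComp_mul_add_starP, ← hu, homComp_sum_star_mul_self_of_lt hd hlt]
    rcases lt_or_ge N n with hNn | hnN
    · obtain ⟨Q, hQ, hPQ, hQ0⟩ :=
        exists_factor_add_starP_eq_zero hc hc0 (isHom_homComp n p) hNn hzero
      exact hasSOSPrefix_of_eq_mul hps (hprod ▸ hP0) (by omega) hQ hc.starP (hprod ▸ hPQ)
        (hQ0 ▸ isSOS_zero)
    · obtain ⟨u', hu'lt, hu'⟩ := exists_deg_lt_of_add_starP_eq_zero hn hnN hP0 hzero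
      exact absurd (humin u' (hu.trans hu'.symm)) (not_le.mpr hu'lt)
  · have htop : c * homComp n p + starP (c * homComp n p) =
        ∑ i, starP (homComp d (b i)) * homComp d (b i) := by
      rw [← homComp_mul_add_starP, ← hu, ← heq, homComp_sum_star_mul_self hd]
    rcases lt_or_ge N n with hNn | hnN
    · obtain ⟨Q, hQ, hPQ, hsos⟩ := exists_factor_isSOS_of_eq_sum_star_mul_self (e := d - N) hc hc0
        ((isHom_homComp n p).cast (by omega)) (fun i => (hβ i).cast (by omega)) htop
      exact hasSOSPrefix_of_eq_mul hps (hprod ▸ hP0) (by omega) hQ hc.starP (hprod ▸ hPQ) hsos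
    · obtain ⟨γ, hγ, hβγ⟩ := exists_eq_mul_of_eq_sum_star_mul_self (k := d - n)
        (hc.cast (by omega)) (isHom_homComp n p) hP0 (fun i => (hβ i).cast (by omega)) htop i'
      exact absurd hβγ ((hred i').homComp_ne_mul hn (by omega) hγ)

lemma mem_leftIdealGen_singleton {p x : FreeStarAlg g} :
    x ∈ leftIdealGen {p} ↔ ∃ f, x = f * p := by
  rw [leftIdealGen, Submodule.mem_span_singleton]
  exact ⟨fun ⟨f, hf⟩ => ⟨f, hf.symm⟩, fun ⟨f, hf⟩ => ⟨f, hf.symm⟩⟩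

lemma MemIplusIstar.sum_star_mul_self_of_sub_mem {I : Submodule (FreeStarAlg g) (FreeStarAlg g)}
    {r : ℕ} {a b : Fin r → FreeStarAlg g} (h : MemIplusIstar I (∑ i, starP (a i) * a i))
    (hab : ∀ i, a i - b i ∈ I) : MemIplusIstar I (∑ i, starP (b i) * b i) := by
  obtain ⟨W₁, hW₁, W₂, hW₂, hW⟩ := h
  set t := fun i => a i - b i
  have hat : ∑ i, starP (a i) * t i ∈ I := I.sum_mem fun i _ => I.smul_mem (starP (a i)) (hab i)
  have htt : ∑ i, starP (t i) * t i ∈ I := I.sum_mem fun i _ => I.smul_mem (starP (t i)) (hab i)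
  refine ⟨W₁ - ∑ i, starP (a i) * t i + ∑ i, starP (t i) * t i, I.add_mem (I.sub_mem hW₁ hat) htt,
    W₂ - ∑ i, starP (a i) * t i, I.sub_mem hW₂ hat, ?_⟩
  have hterm : ∀ i, starP (b i) * b i = starP (a i) * a i - starP (a i) * t i -
      starP (starP (a i) * t i) + starP (t i) * t i := fun i => by
    rw [show b i = a i - t i by simp [t], starP_starP_mul, starP_sub]
    noncomm_ring
  simp only [hterm, Finset.sum_add_distrib, Finset.sum_sub_distrib, ← starP_sum, hW, starP_sub]
  abel

lemma exists_eq_mul_add_starP {p S : FreeStarAlg g} (h : MemIplusIstar (leftIdealGen {p}) S)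
    (hS : starP S = S) : ∃ u, S = u * p + starP (u * p) := by
  obtain ⟨x, hx, y, hy, rfl⟩ := h
  obtain ⟨F, rfl⟩ := mem_leftIdealGen_singleton.mp hx
  obtain ⟨G, rfl⟩ := mem_leftIdealGen_singleton.mp hy
  have hsymm : F * p + starP (G * p) = G * p + starP (F * p) := by
    rw [← hS, starP_add, starP_starP, add_comm]
  refine ⟨(2⁻¹ : ℝ) • (F + G), ?_⟩
  rw [smul_mul_assoc, starP_smul, add_mul, starP_add]
  calc F * p + starP (G * p)
      = (2⁻¹ : ℝ) • ((F * p + starP (G * p)) + (G * p + starP (F * p))) := by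
        rw [← hsymm, ← two_smul ℝ, smul_smul]; norm_num
    _ = (2⁻¹ : ℝ) • (F * p + G * p) + (2⁻¹ : ℝ) • (starP (F * p) + starP (G * p)) := by
        rw [← smul_add]; congr 1; abel

lemma isRealIdeal_of_deg_eq_zero {p : FreeStarAlg g} (hp : deg p = 0) (hp0 : p ≠ 0) :
    IsRealIdeal (leftIdealGen {p}) := by
  intro r a _ i
  have hp1 : IsHom 0 p := fun w hw => Nat.le_zero.mp (hp ▸ length_le_deg hw)
  obtain ⟨c, rfl⟩ : ∃ c, p = MonoidAlgebra.single 1 c := ⟨_, eq_single_one_of_isHom_zero hp1⟩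
  have hc : c ≠ 0 := by rintro rfl; exact hp0 (MonoidAlgebra.single_zero _)
  refine mem_leftIdealGen_singleton.mpr ⟨c⁻¹ • a i, ?_⟩
  ext w
  rw [MonoidAlgebra.coeff_mul_single_one, MonoidAlgebra.coeff_smul, Finsupp.smul_apply,
    smul_eq_mul, inv_mul_eq_div, div_mul_cancel₀ _ hc]

lemma exists_reduced_rep_of_not_isRealIdeal {p : FreeStarAlg g}
    (hnr : ¬ IsRealIdeal (leftIdealGen {p})) :
    ∃ (r : ℕ) (b : Fin r → FreeStarAlg g) (u : FreeStarAlg g), (∃ i, b i ≠ 0) ∧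
      (∀ i, IsReducedMod p (b i)) ∧ ∑ i, starP (b i) * b i = u * p + starP (u * p) ∧
      ∀ u', ∑ i, starP (b i) * b i = u' * p + starP (u' * p) → deg u ≤ deg u' := by
  simp only [IsRealIdeal, not_forall] at hnr
  obtain ⟨r, a, hmem, i₀, hi₀⟩ := hnr
  choose q hq using fun i => exists_isReducedMod p (a i)
  have hsub : ∀ i, a i - (a i - q i * p) ∈ leftIdealGen {p} := fun i =>
    mem_leftIdealGen_singleton.mpr ⟨q i, by abel⟩
  have hherm : starP (∑ i, starP (a i - q i * p) * (a i - q i * p)) =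
      ∑ i, starP (a i - q i * p) * (a i - q i * p) := by
    rw [starP_sum]
    exact Finset.sum_congr rfl fun i _ => starP_star_mul_self _
  obtain ⟨u, hu, humin⟩ :=
    exists_deg_min (exists_eq_mul_add_starP (hmem.sum_star_mul_self_of_sub_mem hsub) hherm)
  exact ⟨r, fun i => a i - q i * p, u,
    ⟨i₀, fun h => hi₀ (mem_leftIdealGen_singleton.mpr ⟨q i₀, sub_eq_zero.mp h⟩)⟩, hq, hu, humin⟩

end FreeStarAlg

/-- Let `p'` be the leading (highest-degree homogeneous) part of `p`
and `p' = p₁ ⋯ p_k` a factorization into irreducible homogeneous factors. If the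
left ideal generated by `p` is not real, then for some `j`, `±(p₁⋯p_j + p_j*⋯p₁*)`
is a sum of squares. -/
theorem stmt19 {g : ℕ} (p p' : FreeStarAlg g)
    (hp'hom : IsHom (deg p) p')
    (hp'coef : ∀ w : FreeMonoid (Fin g ⊕ Fin g),
      (FreeMonoid.toList w).length = deg p → p'.coeff w = p.coeff w)
    (ps : List (FreeStarAlg g))
    (hfac : ∀ q ∈ ps, Irred q ∧ ∃ d, IsHom d q)
    (hprod : p' = ps.prod)
    (hnr : ¬ IsRealIdeal (leftIdealGen {p})) :
    ∃ j, 1 ≤ j ∧ j ≤ ps.length ∧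
      (IsSOS ((ps.take j).prod + starP (ps.take j).prod) ∨
       IsSOS (-((ps.take j).prod + starP (ps.take j).prod))) := by
  have hP : p' = homComp (deg p) p := eq_homComp_of_coeff_eq hp'hom hp'coef
  rcases eq_or_ne p' 0 with hP0 | hP0
  · exact hasSOSPrefix_of_prod_eq_zero (hprod ▸ hP0)
  have hp0 : p ≠ 0 := by
    rintro rfl
    exact hP0 (hP.trans (homComp_zero _))
  have hn : 0 < deg p := Nat.pos_of_ne_zero fun h => hnr (isRealIdeal_of_deg_eq_zero h hp0)
  obtain ⟨r, b, u, hb0, hred, hu, humin⟩ := exists_reduced_rep_of_not_isRealIdeal hnr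
  exact hasSOSPrefix_of_sum_star_mul_self_eq hn hfac (hP ▸ hprod) (hP ▸ hP0) hb0 hred hu humin
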